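/- arXiv:2604.28036 — 4 statements merged into one kernel-verified Lean document; each statement's English description precedes it below -/
import Mathlib

section
/- Pythagorean theorem for exponential families: If q is a probability distribution on a finite set Y, λ₁, λ₂ ∈ ℝ^d, and (μ_q − μ_{λ₁}) · (λ₁ − λ₂) = 0, then KL(q‖p_{λ₂}) = KL(q‖p_{λ₁}) + KL(p_{λ₁}‖p_{λ₂}). -/
open Finset Real

noncomputable section

variable {d : ℕ} {Y : Type*} [Fintype Y]

/-- Dot product on `ℝ^d`. -/
def dotp (x y : Fin d → ℝ) : ℝ := ∑ i, x i * y i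

/-- Partition function `Z_λ`. -/
def Zf (a : Y → ℝ) (φ : Y → Fin d → ℝ) (l : Fin d → ℝ) : ℝ :=
  ∑ y, a y * Real.exp (dotp l (φ y))

/-- Log-partition function `A(λ)`. -/
def Af (a : Y → ℝ) (φ : Y → Fin d → ℝ) (l : Fin d → ℝ) : ℝ := Real.log (Zf a φ l)

/-- Exponential family member `p_λ`. -/
def pf (a : Y → ℝ) (φ : Y → Fin d → ℝ) (l : Fin d → ℝ) (y : Y) : ℝ :=
  a y * Real.exp (dotp l (φ y)) / Zf a φ l

/-- KL divergence on a finite set (convention `0 log 0 = 0` holds since `0 * x = 0`). -/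
def KL (q p : Y → ℝ) : ℝ := ∑ y, q y * Real.log (q y / p y)

/-- Mean of the sufficient statistic `μ_q`. -/
def mu (φ : Y → Fin d → ℝ) (q : Y → ℝ) : Fin d → ℝ := fun i => ∑ y, q y * φ y i

lemma Zf_pos [Nonempty Y] (a : Y → ℝ) (ha : ∀ y, 0 < a y) (φ : Y → Fin d → ℝ)
    (l : Fin d → ℝ) : 0 < Zf a φ l :=
  Finset.sum_pos (fun y _ => mul_pos (ha y) (Real.exp_pos _)) univ_nonempty

lemma pf_pos [Nonempty Y] (a : Y → ℝ) (ha : ∀ y, 0 < a y) (φ : Y → Fin d → ℝ)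
    (l : Fin d → ℝ) (y : Y) : 0 < pf a φ l y :=
  div_pos (mul_pos (ha y) (Real.exp_pos _)) (Zf_pos a ha φ l)

lemma pf_sum [Nonempty Y] (a : Y → ℝ) (ha : ∀ y, 0 < a y) (φ : Y → Fin d → ℝ)
    (l : Fin d → ℝ) : ∑ y, pf a φ l y = 1 := by
  have hz := (Zf_pos a ha φ l).ne'
  simp only [pf, ← Finset.sum_div]
  rw [show ∑ y, a y * Real.exp (dotp l (φ y)) = Zf a φ l from rfl, div_self hz]

lemma log_pf_ratio [Nonempty Y] (a : Y → ℝ) (ha : ∀ y, 0 < a y) (φ : Y → Fin d → ℝ)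
    (l₁ l₂ : Fin d → ℝ) (y : Y) :
    Real.log (pf a φ l₁ y / pf a φ l₂ y)
      = dotp (l₁ - l₂) (φ y) + (Af a φ l₂ - Af a φ l₁) := by
  have h1 := pf_pos a ha φ l₁ y
  have h2 := pf_pos a ha φ l₂ y
  have hz1 := (Zf_pos a ha φ l₁).ne'
  have hz2 := (Zf_pos a ha φ l₂).ne'
  have hae : ∀ l : Fin d → ℝ, a y * Real.exp (dotp l (φ y)) ≠ 0 :=
    fun l => (mul_pos (ha y) (Real.exp_pos _)).ne'
  rw [Real.log_div h1.ne' h2.ne']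
  simp only [pf, Af]
  rw [Real.log_div (hae l₁) hz1, Real.log_div (hae l₂) hz2,
    Real.log_mul (ha y).ne' (Real.exp_pos _).ne',
    Real.log_mul (ha y).ne' (Real.exp_pos _).ne',
    Real.log_exp, Real.log_exp]
  have : dotp (l₁ - l₂) (φ y) = dotp l₁ (φ y) - dotp l₂ (φ y) := by
    simp [dotp, sub_mul, Finset.sum_sub_distrib]
  rw [this]; ring

lemma sum_log_ratio [Nonempty Y] (a : Y → ℝ) (ha : ∀ y, 0 < a y) (φ : Y → Fin d → ℝ)
    (q : Y → ℝ) (hq1 : ∑ y, q y = 1) (l₁ l₂ : Fin d → ℝ) :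
    ∑ y, q y * Real.log (pf a φ l₁ y / pf a φ l₂ y)
      = dotp (l₁ - l₂) (mu φ q) + (Af a φ l₂ - Af a φ l₁) := by
  have key : ∀ y, q y * Real.log (pf a φ l₁ y / pf a φ l₂ y)
      = q y * dotp (l₁ - l₂) (φ y) + q y * (Af a φ l₂ - Af a φ l₁) := by
    intro y; rw [log_pf_ratio a ha φ l₁ l₂ y]; ring
  simp only [key]
  rw [Finset.sum_add_distrib, ← Finset.sum_mul, hq1, one_mul]
  congr 1
  have : dotp (l₁ - l₂) (mu φ q) = ∑ i, ∑ y, q y * ((l₁ - l₂) i * φ y i) := by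
    simp [dotp, mu, Finset.mul_sum]; apply Finset.sum_congr rfl; intros; apply Finset.sum_congr rfl
    intros; ring
  rw [this, Finset.sum_comm]
  apply Finset.sum_congr rfl; intro y _
  simp [dotp, Finset.mul_sum]

theorem pythagorean_theorem (a : Y → ℝ) (ha : ∀ y, 0 < a y) (ha1 : ∑ y, a y = 1)
    (φ : Y → Fin d → ℝ) (q : Y → ℝ) (hq0 : ∀ y, 0 ≤ q y) (hq1 : ∑ y, q y = 1) (l₁ l₂ : Fin d → ℝ)
    (h : dotp (mu φ q - mu φ (pf a φ l₁)) (l₁ - l₂) = 0) :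
    KL q (pf a φ l₂) = KL q (pf a φ l₁) + KL (pf a φ l₁) (pf a φ l₂) := by
  have hne : Nonempty Y := by
    by_contra hY
    rw [not_nonempty_iff] at hY
    simp [Finset.univ_eq_empty] at ha1
  -- step 1: KL q p₂ = KL q p₁ + ∑ q log(p₁/p₂)
  have step1 : KL q (pf a φ l₂)
      = KL q (pf a φ l₁) + ∑ y, q y * Real.log (pf a φ l₁ y / pf a φ l₂ y) := by
    unfold KL
    rw [← Finset.sum_add_distrib]
    apply Finset.sum_congr rfl; intro y _
    rcases eq_or_lt_of_le (hq0 y) with hq | hq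
    · simp [← hq]
    · have h1 := (pf_pos a ha φ l₁ y)
      have h2 := (pf_pos a ha φ l₂ y)
      rw [← mul_add, Real.log_div hq.ne' h2.ne', Real.log_div hq.ne' h1.ne',
        Real.log_div h1.ne' h2.ne']
      ring
  have step2 : KL (pf a φ l₁) (pf a φ l₂)
      = dotp (l₁ - l₂) (mu φ (pf a φ l₁)) + (Af a φ l₂ - Af a φ l₁) := by
    unfold KL
    exact sum_log_ratio a ha φ _ (pf_sum a ha φ l₁) l₁ l₂
  have step3 := sum_log_ratio a ha φ q hq1 l₁ l₂
  have horth : dotp (l₁ - l₂) (mu φ q) = dotp (l₁ - l₂) (mu φ (pf a φ l₁)) := by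
    have : dotp (mu φ q - mu φ (pf a φ l₁)) (l₁ - l₂)
        = dotp (l₁ - l₂) (mu φ q) - dotp (l₁ - l₂) (mu φ (pf a φ l₁)) := by
      simp only [dotp, Pi.sub_apply, sub_mul, mul_sub, Finset.sum_sub_distrib, mul_comm]
    linarith [h ▸ this, this ▸ h]
  rw [step1, step3, horth, step2]
end
end

section
/- Reverse I-projection: If q is a probability distribution on a finite set Y and λ₁ ∈ ℝ^d satisfies μ_{λ₁} = μ_q, then for every λ₂ ∈ ℝ^d, KL(q‖p_{λ₂}) ≥ KL(q‖p_{λ₁}), with equality if and only if p_{λ₂} = p_{λ₁}. -/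
open Finset Real

noncomputable section

variable {d : ℕ} {Y : Type*} [Fintype Y]

/-- Gibbs' inequality with equality condition, for strictly positive pmfs. -/
lemma gibbs_aux {Y : Type*} [Fintype Y] (p r : Y → ℝ) (hp : ∀ y, 0 < p y)
    (hr : ∀ y, 0 < r y) (hp1 : ∑ y, p y = 1) (hr1 : ∑ y, r y = 1) :
    0 ≤ ∑ y, p y * Real.log (p y / r y) ∧
      ((∑ y, p y * Real.log (p y / r y)) = 0 ↔ p = r) := by
  have key : ∀ y, p y - r y ≤ p y * Real.log (p y / r y) := by
    intro y
    have hpos : 0 < r y / p y := div_pos (hr y) (hp y)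
    have h1 := Real.log_le_sub_one_of_pos hpos
    have hlog : Real.log (p y / r y) = - Real.log (r y / p y) := by
      rw [← Real.log_inv, inv_div]
    have h2 : p y * Real.log (r y / p y) ≤ p y * (r y / p y - 1) :=
      mul_le_mul_of_nonneg_left h1 (hp y).le
    have h3 : p y * (r y / p y - 1) = r y - p y := by
      rw [mul_sub, mul_one, mul_comm, div_mul_cancel₀ _ (hp y).ne']
    rw [hlog]; linarith
  have keystrict : ∀ y, p y ≠ r y → p y - r y < p y * Real.log (p y / r y) := by
    intro y hne
    have hpos : 0 < r y / p y := div_pos (hr y) (hp y)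
    have hne1 : r y / p y ≠ 1 := by
      intro heq
      exact hne ((div_eq_one_iff_eq (hp y).ne').mp heq).symm
    have h1 := Real.log_lt_sub_one_of_pos hpos hne1
    have hlog : Real.log (p y / r y) = - Real.log (r y / p y) := by
      rw [← Real.log_inv, inv_div]
    have h2 : p y * Real.log (r y / p y) < p y * (r y / p y - 1) :=
      mul_lt_mul_of_pos_left h1 (hp y)
    have h3 : p y * (r y / p y - 1) = r y - p y := by
      rw [mul_sub, mul_one, mul_comm, div_mul_cancel₀ _ (hp y).ne']
    rw [hlog]; linarith
  have hsum0 : ∑ y, (p y - r y) = 0 := by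
    rw [Finset.sum_sub_distrib, hp1, hr1]; ring
  have hge : 0 ≤ ∑ y, p y * Real.log (p y / r y) := by
    calc (0 : ℝ) = ∑ y, (p y - r y) := hsum0.symm
    _ ≤ ∑ y, p y * Real.log (p y / r y) := Finset.sum_le_sum fun y _ => key y
  refine ⟨hge, ?_, ?_⟩
  · intro hzero
    by_contra hne
    have ⟨y₀, hy₀⟩ : ∃ y, p y ≠ r y := by
      by_contra hall
      push_neg at hall
      exact hne (funext hall)
    have hlt : ∑ y, (p y - r y) < ∑ y, p y * Real.log (p y / r y) :=
      Finset.sum_lt_sum (fun y _ => key y) ⟨y₀, Finset.mem_univ _, keystrict y₀ hy₀⟩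
    rw [hsum0, hzero] at hlt
    exact lt_irrefl _ hlt
  · intro hpr
    subst hpr
    apply Finset.sum_eq_zero
    intro y _
    rw [div_self (hp y).ne']
    simp

theorem reverse_I_projection (a : Y → ℝ) (ha : ∀ y, 0 < a y) (ha1 : ∑ y, a y = 1)
    (φ : Y → Fin d → ℝ) (q : Y → ℝ) (hq0 : ∀ y, 0 ≤ q y) (hq1 : ∑ y, q y = 1) (l₁ : Fin d → ℝ)
    (h : mu φ (pf a φ l₁) = mu φ q) :
    ∀ l₂ : Fin d → ℝ,
      KL q (pf a φ l₂) ≥ KL q (pf a φ l₁) ∧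
      (KL q (pf a φ l₂) = KL q (pf a φ l₁) ↔ pf a φ l₂ = pf a φ l₁) := by
  intro l₂
  have hYne : (Finset.univ : Finset Y).Nonempty := by
    by_contra hn
    rw [Finset.not_nonempty_iff_eq_empty] at hn
    rw [hn, Finset.sum_empty] at ha1
    norm_num at ha1
  have hZ : ∀ l : Fin d → ℝ, 0 < Zf a φ l := fun l =>
    Finset.sum_pos (fun y _ => mul_pos (ha y) (Real.exp_pos _)) hYne
  have hpf : ∀ (l : Fin d → ℝ) y, 0 < pf a φ l y := fun l y =>
    div_pos (mul_pos (ha y) (Real.exp_pos _)) (hZ l)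
  have hpf1 : ∀ l : Fin d → ℝ, ∑ y, pf a φ l y = 1 := by
    intro l
    unfold pf
    rw [← Finset.sum_div]
    exact div_self (hZ l).ne'
  have hlogp : ∀ (l : Fin d → ℝ) y,
      Real.log (pf a φ l y) = Real.log (a y) + dotp l (φ y) - Real.log (Zf a φ l) := by
    intro l y
    unfold pf
    rw [Real.log_div (mul_pos (ha y) (Real.exp_pos _)).ne' (hZ l).ne',
      Real.log_mul (ha y).ne' (Real.exp_ne_zero _), Real.log_exp]
  set g : Y → ℝ := fun y => Real.log (pf a φ l₁ y) - Real.log (pf a φ l₂ y) with hg_def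
  have hgval : ∀ y, g y = (∑ i, (l₁ i - l₂ i) * φ y i) +
      (Real.log (Zf a φ l₂) - Real.log (Zf a φ l₁)) := by
    intro y
    simp only [hg_def, hlogp, dotp]
    simp only [sub_mul, Finset.sum_sub_distrib]
    ring
  -- for any pmf w, ∑ w·g depends only on μ_w
  have hwg : ∀ w : Y → ℝ, (∑ y, w y = 1) →
      ∑ y, w y * g y = (∑ i, (l₁ i - l₂ i) * mu φ w i) +
        (Real.log (Zf a φ l₂) - Real.log (Zf a φ l₁)) := by
    intro w hw
    calc ∑ y, w y * g y
        = ∑ y, ((∑ i, (l₁ i - l₂ i) * (w y * φ y i)) +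
            w y * (Real.log (Zf a φ l₂) - Real.log (Zf a φ l₁))) := by
          apply Finset.sum_congr rfl
          intro y _
          rw [hgval y, mul_add, Finset.mul_sum]
          congr 1
          exact Finset.sum_congr rfl fun i _ => by ring
      _ = (∑ y, ∑ i, (l₁ i - l₂ i) * (w y * φ y i)) +
            (∑ y, w y) * (Real.log (Zf a φ l₂) - Real.log (Zf a φ l₁)) := by
          rw [Finset.sum_add_distrib, Finset.sum_mul]
      _ = (∑ i, (l₁ i - l₂ i) * mu φ w i) +
            (Real.log (Zf a φ l₂) - Real.log (Zf a φ l₁)) := by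
          rw [hw, one_mul, Finset.sum_comm]
          congr 1
          apply Finset.sum_congr rfl
          intro i _
          rw [mu, Finset.mul_sum]
  -- key identity : KL q p₂ - KL q p₁ = ∑ q·g
  have hkey : KL q (pf a φ l₂) - KL q (pf a φ l₁) = ∑ y, q y * g y := by
    unfold KL
    rw [← Finset.sum_sub_distrib]
    apply Finset.sum_congr rfl
    intro y _
    rcases eq_or_lt_of_le (hq0 y) with hz | hpos
    · simp [← hz]
    · rw [Real.log_div hpos.ne' (hpf l₂ y).ne', Real.log_div hpos.ne' (hpf l₁ y).ne']
      simp only [hg_def]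
      ring
  have hswap : ∑ y, q y * g y = ∑ y, pf a φ l₁ y * g y := by
    rw [hwg q hq1, hwg (pf a φ l₁) (hpf1 l₁), h]
  have hKLp : ∑ y, pf a φ l₁ y * g y =
      ∑ y, pf a φ l₁ y * Real.log (pf a φ l₁ y / pf a φ l₂ y) := by
    apply Finset.sum_congr rfl
    intro y _
    rw [Real.log_div (hpf l₁ y).ne' (hpf l₂ y).ne']
  obtain ⟨hge, heq⟩ := gibbs_aux (pf a φ l₁) (pf a φ l₂) (hpf l₁) (hpf l₂) (hpf1 l₁) (hpf1 l₂)
  have hmain : KL q (pf a φ l₂) - KL q (pf a φ l₁) =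
      ∑ y, pf a φ l₁ y * Real.log (pf a φ l₁ y / pf a φ l₂ y) := by
    rw [hkey, hswap, hKLp]
  constructor
  · linarith [hmain ▸ hge]
  · constructor
    · intro hzero
      have : (∑ y, pf a φ l₁ y * Real.log (pf a φ l₁ y / pf a φ l₂ y)) = 0 := by
        rw [← hmain, hzero]; ring
      exact (heq.mp this).symm
    · intro hpp
      have : (∑ y, pf a φ l₁ y * Real.log (pf a φ l₁ y / pf a φ l₂ y)) = 0 :=
        heq.mpr hpp.symm
      linarith [hmain ▸ this]
end
end

section
/- I-projection onto a moment slice: If λ ∈ ℝ^d and q is a probability distribution on a finite set Y with μ_q = μ_λ, then KL(q‖a) = KL(q‖p_λ) + KL(p_λ‖a). Consequently KL(q‖a) ≥ KL(p_λ‖a), with equality if and only if q = p_λ. -/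
open Finset Real

noncomputable section

variable {d : ℕ} {Y : Type*} [Fintype Y]

lemma gibbs (q p : Y → ℝ) (hq0 : ∀ y, 0 ≤ q y) (hp : ∀ y, 0 < p y)
    (hq1 : ∑ y, q y = 1) (hp1 : ∑ y, p y = 1) :
    0 ≤ KL q p ∧ (KL q p = 0 ↔ q = p) := by
  set f : Y → ℝ := fun y => q y * Real.log (q y / p y) - (q y - p y) with hf
  have key : ∀ y, 0 ≤ f y ∧ (f y = 0 → q y = p y) := by
    intro y
    rcases eq_or_lt_of_le (hq0 y) with hqy | hqy
    · constructor
      · simp [hf, ← hqy]; exact (hp y).le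
      · intro h0; simp [hf, ← hqy] at h0; linarith [hp y]
    · have hpq : 0 < p y / q y := div_pos (hp y) hqy
      have hlog : Real.log (p y / q y) ≤ p y / q y - 1 := Real.log_le_sub_one_of_pos hpq
      have hrw : q y * Real.log (q y / p y) = - (q y * Real.log (p y / q y)) := by
        rw [show q y / p y = (p y / q y)⁻¹ by rw [inv_div], Real.log_inv]; ring
      constructor
      · have := mul_le_mul_of_nonneg_left hlog (hq0 y)
        rw [mul_sub, mul_div_cancel₀ _ hqy.ne', mul_one] at this
        simp only [hf, hrw]; linarith
      · intro h0
        by_contra hne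
        have hne1 : p y / q y ≠ 1 := by
          intro h1; exact hne ((div_eq_one_iff_eq hqy.ne').mp h1).symm
        have hlt : Real.log (p y / q y) < p y / q y - 1 :=
          Real.log_lt_sub_one_of_pos hpq hne1
        have := mul_lt_mul_of_pos_left hlt hqy
        rw [mul_sub, mul_div_cancel₀ _ hqy.ne', mul_one] at this
        simp only [hf, hrw] at h0; linarith
  have hsumf : ∑ y, f y = KL q p := by
    simp [hf, Finset.sum_sub_distrib, hq1, hp1, KL]
  have hnn : 0 ≤ KL q p := by
    rw [← hsumf]; exact Finset.sum_nonneg fun y _ => (key y).1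
  refine ⟨hnn, ⟨fun h0 => ?_, fun h0 => ?_⟩⟩
  · funext y
    have hz : ∀ y ∈ Finset.univ, f y = 0 := by
      rw [← Finset.sum_eq_zero_iff_of_nonneg (fun y _ => (key y).1), hsumf]; exact h0
    exact (key y).2 (hz y (Finset.mem_univ y))
  · subst h0
    simp only [KL]
    apply Finset.sum_eq_zero
    intro y _
    simp [div_self (hp y).ne']

theorem I_projection_moment_slice (a : Y → ℝ) (ha : ∀ y, 0 < a y) (ha1 : ∑ y, a y = 1)
    (φ : Y → Fin d → ℝ) (q : Y → ℝ) (hq0 : ∀ y, 0 ≤ q y) (hq1 : ∑ y, q y = 1) (l : Fin d → ℝ)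
    (h : mu φ q = mu φ (pf a φ l)) :
    KL q a = KL q (pf a φ l) + KL (pf a φ l) a ∧
    KL q a ≥ KL (pf a φ l) a ∧
    (KL q a = KL (pf a φ l) a ↔ q = pf a φ l) := by
  have hY : Nonempty Y := by
    by_contra hY
    rw [not_nonempty_iff] at hY
    simp [Finset.univ_eq_empty] at ha1
  have hZ : 0 < Zf a φ l :=
    Finset.sum_pos (fun y _ => mul_pos (ha y) (Real.exp_pos _)) Finset.univ_nonempty
  set p := pf a φ l with hpdef
  have hp : ∀ y, 0 < p y := fun y => div_pos (mul_pos (ha y) (Real.exp_pos _)) hZ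
  have hp1 : ∑ y, p y = 1 := by
    simp only [hpdef, pf, ← Finset.sum_div]
    exact div_self hZ.ne'
  have hlogp : ∀ y, Real.log (p y / a y) = dotp l (φ y) - Af a φ l := by
    intro y
    have : p y / a y = Real.exp (dotp l (φ y)) / Zf a φ l := by
      rw [hpdef, pf, div_right_comm, mul_comm, mul_div_assoc, div_self (ha y).ne', mul_one]
    rw [this, Real.log_div (Real.exp_pos _).ne' hZ.ne', Real.log_exp, Af]
  -- key: for any distribution r, ∑ r y * log (p y / a y) = dotp l (mu φ r) - Af
  have hkey : ∀ r : Y → ℝ, (∑ y, r y = 1) →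
      ∑ y, r y * Real.log (p y / a y) = dotp l (mu φ r) - Af a φ l := by
    intro r hr1
    have : ∀ y, r y * Real.log (p y / a y) = (∑ i, l i * (r y * φ y i)) - r y * Af a φ l := by
      intro y
      rw [hlogp y, mul_sub, dotp, Finset.mul_sum]
      congr 1
      apply Finset.sum_congr rfl
      intro i _
      ring
    simp only [this, Finset.sum_sub_distrib, ← Finset.sum_mul, hr1, one_mul]
    congr 1
    rw [dotp, Finset.sum_comm]
    apply Finset.sum_congr rfl
    intro i _
    rw [mu, ← Finset.mul_sum, Finset.mul_sum]
  have split : ∀ y, q y * Real.log (q y / a y)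
      = q y * Real.log (q y / p y) + q y * Real.log (p y / a y) := by
    intro y
    rcases eq_or_lt_of_le (hq0 y) with hqy | hqy
    · simp [← hqy]
    · rw [← mul_add, Real.log_div hqy.ne' (hp y).ne',
        Real.log_div (hp y).ne' (ha y).ne', Real.log_div hqy.ne' (ha y).ne']
      ring_nf
  have hKLpa : KL p a = dotp l (mu φ p) - Af a φ l := by
    rw [KL]
    exact hkey p hp1
  have eq1 : KL q a = KL q p + KL p a := by
    rw [KL, KL]
    simp only [split]
    rw [Finset.sum_add_distrib, hkey q hq1, hKLpa, h]
  obtain ⟨hnn, hiff⟩ := gibbs q p hq0 hp hq1 hp1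
  refine ⟨eq1, by linarith, ?_⟩
  constructor
  · intro he
    exact hiff.mp (by linarith)
  · intro he
    rw [eq1, hiff.mpr he]
    ring
end
end

section
/- Growth at infinity of the tilted log-partition function: Let Y be finite, μ an interior point of conv(φ(Y)), and f(λ) = A(λ) − λ · μ. Then there exist r > 0 and c ∈ ℝ such that f(λ) ≥ r‖λ‖ + c for all λ ∈ ℝ^d; in particular f(λ) → +∞ as ‖λ‖ → ∞. -/
open Finset Real RealInnerProductSpace

noncomputable section

variable {d : ℕ} {Y : Type*} [Fintype Y]

/-- Log-partition function on Euclidean space. -/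
def Ae (a : Y → ℝ) (φ : Y → EuclideanSpace ℝ (Fin d)) (l : EuclideanSpace ℝ (Fin d)) : ℝ :=
  Real.log (∑ y, a y * Real.exp ⟪l, φ y⟫)

/-- Exponential family member `p_λ`. -/
def pe (a : Y → ℝ) (φ : Y → EuclideanSpace ℝ (Fin d)) (l : EuclideanSpace ℝ (Fin d)) (y : Y) : ℝ :=
  a y * Real.exp (⟪l, φ y⟫ - Ae a φ l)

theorem growth_at_infinity (a : Y → ℝ) (ha : ∀ y, 0 < a y) (ha1 : ∑ y, a y = 1)
    (φ : Y → EuclideanSpace ℝ (Fin d)) (μ : EuclideanSpace ℝ (Fin d))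
    (hμ : μ ∈ interior (convexHull ℝ (Set.range φ))) :
    (∃ r > 0, ∃ c : ℝ, ∀ l : EuclideanSpace ℝ (Fin d),
        Ae a φ l - ⟪l, μ⟫ ≥ r * ‖l‖ + c) ∧
    Filter.Tendsto (fun l : EuclideanSpace ℝ (Fin d) => Ae a φ l - ⟪l, μ⟫)
      (Bornology.cobounded _) Filter.atTop := by
  have hY : Nonempty Y := by
    by_contra h
    rw [not_nonempty_iff] at h
    have : Set.range φ = ∅ := Set.range_eq_empty φ
    rw [this, convexHull_empty, interior_empty] at hμ
    exact hμ
  have hne : (Finset.univ : Finset Y).Nonempty := Finset.univ_nonempty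
  obtain ⟨r', hr', hball⟩ := Metric.isOpen_iff.mp isOpen_interior μ hμ
  set r : ℝ := r' / 2 with hrdef
  have hr : 0 < r := by positivity
  set c : ℝ := Finset.univ.inf' hne (fun y => Real.log (a y)) with hc
  -- max of linear functional bounds the hull
  have hM : ∀ l : EuclideanSpace ℝ (Fin d), ∀ p ∈ convexHull ℝ (Set.range φ),
      ⟪l, p⟫ ≤ Finset.univ.sup' hne (fun y => ⟪l, φ y⟫) := by
    intro l p hp
    have hlin : IsLinearMap ℝ (fun x : EuclideanSpace ℝ (Fin d) => ⟪l, x⟫) :=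
      ⟨fun x y => inner_add_right l x y, fun c x => real_inner_smul_right l x c⟩
    have := convexHull_min (s := Set.range φ)
      (t := {x | ⟪l, x⟫ ≤ Finset.univ.sup' hne (fun y => ⟪l, φ y⟫)})
      (by rintro x ⟨y, rfl⟩; exact Finset.le_sup' (fun z => ⟪l, φ z⟫) (Finset.mem_univ y))
      (convex_halfSpace_le hlin _)
    exact this hp
  have key : ∀ l : EuclideanSpace ℝ (Fin d),
      ⟪l, μ⟫ + r * ‖l‖ ≤ Finset.univ.sup' hne (fun y => ⟪l, φ y⟫) := by
    intro l
    by_cases hl : l = 0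
    · subst hl
      simpa using hM 0 μ (interior_subset hμ)
    · have hln : (0:ℝ) < ‖l‖ := norm_pos_iff.mpr hl
      have hpmem : μ + (r / ‖l‖) • l ∈ convexHull ℝ (Set.range φ) := by
        apply interior_subset
        apply hball
        simp only [Metric.mem_ball, dist_eq_norm, add_sub_cancel_left, norm_smul]
        rw [Real.norm_eq_abs, abs_div, abs_of_pos hr, abs_of_pos hln,
          div_mul_cancel₀ _ (ne_of_gt hln)]
        linarith
      have := hM l _ hpmem
      rw [inner_add_right, real_inner_smul_right, real_inner_self_eq_norm_sq] at this
      have heq : r / ‖l‖ * ‖l‖ ^ 2 = r * ‖l‖ := by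
        field_simp
      linarith [this, heq ▸ this]
  have hA : ∀ l : EuclideanSpace ℝ (Fin d),
      Ae a φ l ≥ c + Finset.univ.sup' hne (fun y => ⟪l, φ y⟫) := by
    intro l
    obtain ⟨y0, _, hy0⟩ := Finset.exists_mem_eq_sup' hne (fun y => ⟪l, φ y⟫)
    have hpos : ∀ y ∈ Finset.univ, (0:ℝ) ≤ a y * Real.exp ⟪l, φ y⟫ :=
      fun y _ => le_of_lt (mul_pos (ha y) (Real.exp_pos _))
    have hsum : a y0 * Real.exp ⟪l, φ y0⟫ ≤ ∑ y, a y * Real.exp ⟪l, φ y⟫ :=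
      Finset.single_le_sum hpos (Finset.mem_univ y0)
    have h1 : Real.log (a y0 * Real.exp ⟪l, φ y0⟫) ≤ Ae a φ l :=
      Real.log_le_log (mul_pos (ha y0) (Real.exp_pos _)) hsum
    rw [Real.log_mul (ne_of_gt (ha y0)) (ne_of_gt (Real.exp_pos _)),
      Real.log_exp] at h1
    have h2 : c ≤ Real.log (a y0) := Finset.inf'_le _ (Finset.mem_univ y0)
    rw [hy0]
    linarith
  have main : ∀ l : EuclideanSpace ℝ (Fin d), Ae a φ l - ⟪l, μ⟫ ≥ r * ‖l‖ + c := by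
    intro l
    have := hA l
    have := key l
    linarith
  refine ⟨⟨r, hr, c, main⟩, ?_⟩
  have htend : Filter.Tendsto (fun l : EuclideanSpace ℝ (Fin d) => r * ‖l‖ + c)
      (Bornology.cobounded _) Filter.atTop := by
    apply Filter.tendsto_atTop_add_const_right
    exact (tendsto_norm_cobounded_atTop).const_mul_atTop hr
  exact Filter.tendsto_atTop_mono main htend
end
end
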